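/- Let V be a finite vertex set, let G be a tree on V (a connected acyclic simple graph), and let (X_v)_{v∈V} be random variables on a finite probability space, each taking values in a finite type. Assume the global Markov property along paths: for every pair of distinct vertices u, w and every vertex m ≠ u, w lying on the unique path in G between u and w, the variables X_u and X_w are conditionally independent given X_m. Then for every tree T′ on the same vertex set V, the total mutual information over the edges of G is at least that over the edges of T′: Σ_{{u,v} ∈ E(G)} I(X_u ; X_v) ≥ Σ_{{u,v} ∈ E(T′)} I(X_u ; X_v). In other words, the true tree G is a maximum-weight spanning tree for the mutual-information edge weights. -/

import Mathlib

open scoped Classical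

/-- Probability of an event `p` under the pmf `w` on a finite sample space. -/
noncomputable def pr {Ω : Type*} [Fintype Ω] (w : Ω → ℝ) (p : Ω → Prop) : ℝ :=
  ∑ ω : Ω, if p ω then w ω else 0

/-- Mutual information `I(X;Y)` (terms with zero joint probability vanish since `0 * log _ = 0`). -/
noncomputable def mutualInfo {Ω A B : Type*} [Fintype Ω] [Fintype A] [Fintype B]
    (w : Ω → ℝ) (X : Ω → A) (Y : Ω → B) : ℝ :=
  ∑ a : A, ∑ b : B,
    pr w (fun ω => X ω = a ∧ Y ω = b) *
      Real.log (pr w (fun ω => X ω = a ∧ Y ω = b) /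
        (pr w (fun ω => X ω = a) * pr w (fun ω => Y ω = b)))

/-- Conditional mutual information `I(X;Y∣Z)` (zero-probability terms vanish). -/
noncomputable def condMutualInfo {Ω A B C : Type*} [Fintype Ω] [Fintype A] [Fintype B] [Fintype C]
    (w : Ω → ℝ) (X : Ω → A) (Y : Ω → B) (Z : Ω → C) : ℝ :=
  ∑ a : A, ∑ b : B, ∑ c : C,
    pr w (fun ω => X ω = a ∧ Y ω = b ∧ Z ω = c) *
      Real.log (pr w (fun ω => Z ω = c) * pr w (fun ω => X ω = a ∧ Y ω = b ∧ Z ω = c) /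
        (pr w (fun ω => X ω = a ∧ Z ω = c) * pr w (fun ω => Y ω = b ∧ Z ω = c)))

/-- `X` and `Y` are conditionally independent given `Z`. -/
def CondIndep {Ω A B C : Type*} [Fintype Ω] [Fintype A] [Fintype B] [Fintype C]
    (w : Ω → ℝ) (X : Ω → A) (Y : Ω → B) (Z : Ω → C) : Prop :=
  ∀ (a : A) (b : B) (c : C),
    pr w (fun ω => X ω = a ∧ Y ω = b ∧ Z ω = c) * pr w (fun ω => Z ω = c) =
      pr w (fun ω => X ω = a ∧ Z ω = c) * pr w (fun ω => Y ω = b ∧ Z ω = c)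

theorem mutualInfo_symm {Ω A B : Type*} [Fintype Ω] [Fintype A] [Fintype B]
    (w : Ω → ℝ) (X : Ω → A) (Y : Ω → B) :
    mutualInfo w X Y = mutualInfo w Y X := by
  unfold mutualInfo
  rw [Finset.sum_comm]
  refine Finset.sum_congr rfl fun b _ => Finset.sum_congr rfl fun a _ => ?_
  have h1 : (fun ω => X ω = a ∧ Y ω = b) = (fun ω => Y ω = b ∧ X ω = a) :=
    funext fun ω => propext and_comm
  rw [h1, mul_comm (pr w fun ω => X ω = a)]

/-- The mutual-information weight of an (unordered) edge. -/
noncomputable def edgeMI {V Ω : Type*} [Fintype Ω] (w : Ω → ℝ)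
    (A : V → Type*) [∀ v, Fintype (A v)] (X : ∀ v, Ω → A v) (e : Sym2 V) : ℝ :=
  Sym2.lift ⟨fun u v => mutualInfo w (X u) (X v),
    fun u v => mutualInfo_symm w (X u) (X v)⟩ e

/-!
Conditioning on `X m` can only lose information about `X u`: if `X u` and `X v` are conditionally
independent given `X m`, then `I(X u; X v) ≤ I(X u; X m)` (data processing, via Gibbs'
inequality). Applied at the second vertex of the `G`-path from `u` to `v` and then inductively, the
Markov property bounds `I(X u; X v)` by the information across every edge of that path. This is the
cycle property of a maximum-weight spanning tree, and Kruskal's exchange argument finishes: an edge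
`s(u, v)` of `T'` outside `G` is traded for an edge of the `G`-path from `u` to `v` that reconnects
the two halves of `T' - s(u, v)`. This does not decrease the weight, keeps a tree, and brings `T'`
one edge closer to `G`.
-/

open Finset Real

/-- With `p * pc = pac * pbc`, the two logarithms differ by `log (p * pb / (pab * pbc))`, and
`log x ≥ 1 - x⁻¹`. -/
lemma mul_log_add_sub_le_mul_log {p pab pbc pac pa pb pc : ℝ} (hp : 0 < p) (hab : 0 < pab)
    (hbc : 0 < pbc) (ha : 0 < pa) (hb : 0 < pb) (hc : 0 < pc)
    (hci : p * pc = pac * pbc) :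
    p * log (pab / (pa * pb)) + (p - pab * pbc / pb) ≤ p * log (pac / (pa * pc)) := by
  have hlog : log (pac / (pa * pc)) = log (pab / (pa * pb)) + log (p * pb / (pab * pbc)) := by
    rw [← log_mul (by positivity) (by positivity)]
    congr 1
    field_simp
    linear_combination -hci
  have hgibbs := one_sub_inv_le_log_of_pos (show 0 < p * pb / (pab * pbc) by positivity)
  rw [hlog, mul_add]
  have : p * (1 - (p * pb / (pab * pbc))⁻¹) = p - pab * pbc / pb := by field_simp
  nlinarith

section Probability

variable {Ω A B C : Type*} [Fintype Ω] (w : Ω → ℝ)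

lemma pr_congr {p q : Ω → Prop} (h : ∀ ω, p ω ↔ q ω) : pr w p = pr w q := by
  simp only [pr, h]

lemma pr_mono (hw0 : ∀ ω, 0 ≤ w ω) {p q : Ω → Prop} (h : ∀ ω, p ω → q ω) :
    pr w p ≤ pr w q :=
  sum_le_sum fun ω _ ↦ by split_ifs <;> grind

lemma pr_nonneg (hw0 : ∀ ω, 0 ≤ w ω) (p : Ω → Prop) : 0 ≤ pr w p :=
  sum_nonneg fun ω _ ↦ by split_ifs <;> grind

lemma pr_eq_sum_pr_and [Fintype B] (Y : Ω → B) (p : Ω → Prop) :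
    pr w p = ∑ b, pr w (fun ω ↦ p ω ∧ Y ω = b) := by
  unfold pr
  rw [sum_comm]
  refine sum_congr rfl fun ω _ ↦ ?_
  by_cases hp : p ω <;> simp [hp]

variable {w} [Fintype A] [Fintype B] [Fintype C] {X : Ω → A} {Y : Ω → B} {Z : Ω → C}

lemma CondIndep.symm (h : CondIndep w X Y Z) : CondIndep w Y X Z := by
  intro b a c
  rw [pr_congr w (q := fun ω ↦ X ω = a ∧ Y ω = b ∧ Z ω = c) (by tauto),
    mul_comm (pr w fun ω ↦ Y ω = b ∧ Z ω = c)]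
  exact h a b c

lemma CondIndep.mul_log_add_sub_le (hw0 : ∀ ω, 0 ≤ w ω) (h : CondIndep w X Y Z) (a : A) (b : B)
    (c : C) :
    pr w (fun ω ↦ X ω = a ∧ Y ω = b ∧ Z ω = c) * log (pr w (fun ω ↦ X ω = a ∧ Y ω = b) /
        (pr w (fun ω ↦ X ω = a) * pr w (fun ω ↦ Y ω = b))) +
      (pr w (fun ω ↦ X ω = a ∧ Y ω = b ∧ Z ω = c) -
        pr w (fun ω ↦ X ω = a ∧ Y ω = b) * pr w (fun ω ↦ Y ω = b ∧ Z ω = c) /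
          pr w (fun ω ↦ Y ω = b)) ≤
      pr w (fun ω ↦ X ω = a ∧ Y ω = b ∧ Z ω = c) * log (pr w (fun ω ↦ X ω = a ∧ Z ω = c) /
        (pr w (fun ω ↦ X ω = a) * pr w (fun ω ↦ Z ω = c))) := by
  rcases (pr_nonneg w hw0 (fun ω ↦ X ω = a ∧ Y ω = b ∧ Z ω = c)).eq_or_lt with h0 | hpos
  · rw [← h0]
    have := pr_nonneg w hw0 (fun ω ↦ X ω = a ∧ Y ω = b)
    have := pr_nonneg w hw0 (fun ω ↦ Y ω = b ∧ Z ω = c)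
    have := pr_nonneg w hw0 (fun ω ↦ Y ω = b)
    simp only [zero_mul, zero_sub, zero_add, neg_nonpos]
    positivity
  · have pos (q : Ω → Prop) (hq : ∀ ω, X ω = a ∧ Y ω = b ∧ Z ω = c → q ω) : 0 < pr w q :=
      hpos.trans_le (pr_mono w hw0 hq)
    exact mul_log_add_sub_le_mul_log hpos (pos _ (by tauto)) (pos _ (by tauto))
      (pos _ (by tauto)) (pos _ (by tauto)) (pos _ (by tauto)) (h a b c)

theorem mutualInfo_le_of_condIndep (hw0 : ∀ ω, 0 ≤ w ω) (h : CondIndep w X Y Z) :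
    mutualInfo w X Y ≤ mutualInfo w X Z := by
  have hXY : ∀ a b, pr w (fun ω ↦ X ω = a ∧ Y ω = b) =
      ∑ c, pr w (fun ω ↦ X ω = a ∧ Y ω = b ∧ Z ω = c) := fun a b ↦ by
    rw [pr_eq_sum_pr_and w Z]; simp only [and_assoc]
  have hXZ : ∀ a c, pr w (fun ω ↦ X ω = a ∧ Z ω = c) =
      ∑ b, pr w (fun ω ↦ X ω = a ∧ Y ω = b ∧ Z ω = c) := fun a c ↦ by
    rw [pr_eq_sum_pr_and w Y]; exact sum_congr rfl fun b _ ↦ pr_congr w (by tauto)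
  have hY : ∀ b, pr w (fun ω ↦ Y ω = b) = ∑ a, pr w (fun ω ↦ X ω = a ∧ Y ω = b) :=
    fun b ↦ by rw [pr_eq_sum_pr_and w X]; exact sum_congr rfl fun a _ ↦ pr_congr w (by tauto)
  have hY' : ∀ b, pr w (fun ω ↦ Y ω = b) = ∑ c, pr w (fun ω ↦ Y ω = b ∧ Z ω = c) :=
    fun b ↦ pr_eq_sum_pr_and w Z _
  refine Eq.trans_le ?_ ((sum_le_sum fun a (_ : a ∈ univ) ↦
    sum_le_sum fun b (_ : b ∈ univ) ↦ sum_le_sum fun c (_ : c ∈ univ) ↦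
      h.mul_log_add_sub_le hw0 a b c).trans_eq ?_)
  · simp only [sum_add_distrib]
    rw [← add_zero (mutualInfo w X Y)]
    congr 1
    · refine sum_congr rfl fun a _ ↦ sum_congr rfl fun b _ ↦ ?_
      rw [← sum_mul, ← hXY]
    · rw [eq_comm, sum_comm]
      refine sum_eq_zero fun b _ ↦ ?_
      -- both sums equal `pr w (Y = b)`
      simp only [sum_sub_distrib, ← hXY, ← hY, ← mul_sum, ← sum_div, ← sum_mul, ← hY',
        mul_self_div_self, sub_self]
  · unfold mutualInfo
    refine sum_congr rfl fun a _ ↦ ?_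
    rw [sum_comm]
    refine sum_congr rfl fun c _ ↦ ?_
    rw [← sum_mul, ← hXZ]

end Probability

namespace SimpleGraph

variable {V : Type*} {G T : SimpleGraph V}

lemma Connected.reachable_deleteEdges_or (hT : T.Connected) (u v a : V) :
    (T.deleteEdges {s(u, v)}).Reachable u a ∨ (T.deleteEdges {s(u, v)}).Reachable v a := by
  obtain ⟨P, hP⟩ := hT.exists_isPath a u
  by_cases he : s(u, v) ∈ P.edges
  · have hv := P.snd_mem_support_of_mem_edges he
    have hu := Walk.endpoint_notMem_support_takeUntil hP hv (P.adj_of_mem_edges he).ne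
    have he' : s(u, v) ∉ (P.takeUntil v hv).edges := fun h ↦
      hu ((P.takeUntil v hv).fst_mem_support_of_mem_edges h)
    exact .inr ⟨((P.takeUntil v hv).toDeleteEdges _ (by grind)).reverse⟩
  · exact .inl ⟨(P.toDeleteEdges _ (by grind)).reverse⟩

theorem IsTree.exists_isTree_edgeSet_eq_insert (hT : T.IsTree) {u v : V} (huv : T.Adj u v)
    (p : G.Walk u v) :
    ∃ e ∈ p.edges, e ∉ T.edgeSet \ {s(u, v)} ∧
      ∃ T' : SimpleGraph V, T'.IsTree ∧ T'.edgeSet = insert e (T.edgeSet \ {s(u, v)}) := by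
  set D := T.deleteEdges {s(u, v)}
  have hsplit := hT.connected.reachable_deleteEdges_or u v
  have hnuv : ¬ D.Reachable u v :=
    isBridge_iff.mp (isAcyclic_iff_forall_adj_isBridge.mp hT.isAcyclic huv)
  obtain ⟨d, hd, hx, hy⟩ := p.exists_boundary_dart {a | D.Reachable u a} .rfl hnuv
  have hxy : ¬ D.Reachable d.fst d.snd := fun h ↦ hy (hx.trans h)
  have hvy : D.Reachable v d.snd := (hsplit _).resolve_left hy
  set T' := D ⊔ edge d.fst d.snd
  have hDT' : D ≤ T' := le_sup_left
  have hxyT' : T'.Adj d.fst d.snd := Or.inr (by simp [edge_adj, d.adj.ne])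
  have huv' : T'.Reachable u v :=
    ((hx.mono hDT').trans hxyT'.reachable).trans (hvy.symm.mono hDT')
  refine ⟨d.edge, List.mem_map_of_mem hd,
    fun h ↦ hxy (Adj.reachable (by rwa [← mem_edgeSet, edgeSet_deleteEdges])),
    T', ⟨?_, (hT.isAcyclic.anti (deleteEdges_le _)).sup_edge_of_not_reachable hxy⟩, ?_⟩
  · refine (connected_iff_exists_forall_reachable _).2 ⟨u, fun a ↦ ?_⟩
    exact (hsplit a).elim (·.mono hDT') fun h ↦ huv'.trans (h.mono hDT')
  · rw [edgeSet_sup, edgeSet_deleteEdges, edgeSet_edge_of_ne d.adj.ne, Set.union_singleton]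
    rfl

theorem IsTree.sum_edgeFinset_le_of_le_on_paths [Fintype V] [DecidableEq V]
    [DecidableRel G.Adj] [DecidableRel T.Adj] {M : Type*} [AddCommMonoid M] [PartialOrder M]
    [IsOrderedAddMonoid M] (hG : G.IsTree) (hT : T.IsTree) (f : Sym2 V → M)
    (hf : ∀ u v (p : G.Walk u v), p.IsPath → ∀ e ∈ p.edges, f s(u, v) ≤ f e) :
    ∑ e ∈ T.edgeFinset, f e ≤ ∑ e ∈ G.edgeFinset, f e := by
  obtain ⟨n, hn⟩ : ∃ n, #(T.edgeFinset \ G.edgeFinset) = n := ⟨_, rfl⟩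
  induction n generalizing T with
  | zero =>
    have hsub := Finset.sdiff_eq_empty_iff_subset.mp (Finset.card_eq_zero.mp hn)
    have := hG.card_edgeFinset
    have := hT.card_edgeFinset
    rw [Finset.eq_of_subset_of_card_le hsub (by omega)]
  | succ n ih =>
    obtain ⟨e, he⟩ := Finset.card_pos.mp (by rw [hn]; omega)
    induction e using Sym2.ind with | _ u v => ?_
    have huv : T.Adj u v := mem_edgeFinset.mp (Finset.mem_sdiff.mp he).1
    obtain ⟨p, hp⟩ := hG.connected.exists_isPath u v
    obtain ⟨e, hep, heT, T', hT', hT'E⟩ := hT.exists_isTree_edgeSet_eq_insert huv p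
    have heG : e ∈ G.edgeFinset := mem_edgeFinset.mpr (p.edges_subset_edgeSet hep)
    have hT'F : T'.edgeFinset = insert e (T.edgeFinset.erase s(u, v)) := by
      ext; simp [hT'E, and_comm]
    have hcard : #(T'.edgeFinset \ G.edgeFinset) = n := by
      rw [hT'F, Finset.insert_sdiff_of_mem _ heG, Finset.erase_sdiff_comm,
        Finset.card_erase_of_mem he, hn, Nat.add_sub_cancel]
    calc ∑ e ∈ T.edgeFinset, f e
        = f s(u, v) + ∑ e ∈ T.edgeFinset.erase s(u, v), f e :=
          (Finset.add_sum_erase _ _ (mem_edgeFinset.mpr huv)).symm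
      _ ≤ f e + ∑ e ∈ T.edgeFinset.erase s(u, v), f e := by gcongr; exact hf u v p hp e hep
      _ = ∑ e ∈ T'.edgeFinset, f e := by
          rw [hT'F, Finset.sum_insert (by simpa [and_comm] using heT)]
      _ ≤ ∑ e ∈ G.edgeFinset, f e := ih hT' hcard

end SimpleGraph

section Markov

open SimpleGraph

variable {V Ω : Type*} [Fintype Ω] {w : Ω → ℝ} {A : V → Type*} [∀ v, Fintype (A v)]
  {X : ∀ v, Ω → A v} {G : SimpleGraph V}

def IsMarkovAlongPaths (w : Ω → ℝ) (X : ∀ v, Ω → A v) (G : SimpleGraph V) : Prop :=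
  ∀ u w' m : V, u ≠ w' → m ≠ u → m ≠ w' →
    ∀ p : G.Walk u w', p.IsPath → m ∈ p.support → CondIndep w (X u) (X w') (X m)

/-- Conditioning on the second vertex `u'` of the path, data processing bounds `I(X u; X v)` by both
`I(X u; X u')` and `I(X u'; X v)`. -/
theorem IsMarkovAlongPaths.edgeMI_le_of_mem_edges (hw0 : ∀ ω, 0 ≤ w ω)
    (hX : IsMarkovAlongPaths w X G) {u v : V} (p : G.Walk u v) (hp : p.IsPath) {e : Sym2 V}
    (he : e ∈ p.edges) : edgeMI w A X s(u, v) ≤ edgeMI w A X e := by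
  induction p with
  | nil => simp at he
  | @cons u u' v huu' p ih =>
    rw [Walk.cons_isPath_iff] at hp
    by_cases hu'v : u' = v
    · subst hu'v
      rw [Walk.edges_cons, Walk.edges_eq_nil.mpr (Walk.isPath_iff_nil.mp hp.1),
        List.mem_singleton] at he
      rw [he]
    have hci := hX u v u' (fun h ↦ hp.2 (h ▸ p.end_mem_support)) huu'.ne.symm hu'v
      (.cons huu' p) (hp.1.cons hp.2) (by simp)
    simp only [edgeMI, Sym2.lift_mk] at ih ⊢
    rcases List.mem_cons.mp he with rfl | he
    · exact mutualInfo_le_of_condIndep hw0 hci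
    · calc mutualInfo w (X u) (X v)
          = mutualInfo w (X v) (X u) := mutualInfo_symm _ _ _
        _ ≤ mutualInfo w (X v) (X u') := mutualInfo_le_of_condIndep hw0 hci.symm
        _ = mutualInfo w (X u') (X v) := mutualInfo_symm _ _ _
        _ ≤ _ := ih hp.1 he

end Markov

theorem tree_is_max_weight_spanning_tree_general
    {V Ω : Type*} [Fintype V] [DecidableEq V] [Fintype Ω]
    (w : Ω → ℝ) (hw0 : ∀ ω, 0 ≤ w ω)
    (A : V → Type*) [∀ v, Fintype (A v)] (X : ∀ v, Ω → A v)
    (G : SimpleGraph V) [DecidableRel G.Adj]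
    (hGconn : G.Connected) (hGacyc : G.IsAcyclic)
    (hMarkov : ∀ u w' m : V, u ≠ w' → m ≠ u → m ≠ w' →
      ∀ p : G.Walk u w', p.IsPath → m ∈ p.support →
        CondIndep w (X u) (X w') (X m))
    (T' : SimpleGraph V) [DecidableRel T'.Adj]
    (hT'conn : T'.Connected) (hT'acyc : T'.IsAcyclic) :
    ∑ e ∈ T'.edgeFinset, edgeMI w A X e ≤ ∑ e ∈ G.edgeFinset, edgeMI w A X e :=
  SimpleGraph.IsTree.sum_edgeFinset_le_of_le_on_paths ⟨hGconn, hGacyc⟩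
    ⟨hT'conn, hT'acyc⟩ (edgeMI w A X) fun _ _ p hp _ he ↦
      IsMarkovAlongPaths.edgeMI_le_of_mem_edges hw0 hMarkov p hp he

/-- Let `G` be a tree on a finite vertex set `V` and `(X v)` random variables
satisfying the global Markov property along paths of `G`: whenever `m` lies strictly between `u`
and `w'` on the (unique) path of `G` joining them, `X u` and `X w'` are conditionally independent
given `X m`. Then for every tree `T'` on `V`, the total mutual information over the edges of `G`
is at least that over the edges of `T'`; i.e., `G` is a maximum-weight spanning tree for the
mutual-information edge weights. -/
theorem tree_is_max_weight_spanning_tree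
    {V Ω : Type*} [Fintype V] [DecidableEq V] [Fintype Ω]
    (w : Ω → ℝ) (hw0 : ∀ ω, 0 ≤ w ω) (hw1 : ∑ ω : Ω, w ω = 1)
    (A : V → Type*) [∀ v, Fintype (A v)] (X : ∀ v, Ω → A v)
    (G : SimpleGraph V) [DecidableRel G.Adj]
    (hGconn : G.Connected) (hGacyc : G.IsAcyclic)
    (hMarkov : ∀ u w' m : V, u ≠ w' → m ≠ u → m ≠ w' →
      ∀ p : G.Walk u w', p.IsPath → m ∈ p.support →
        CondIndep w (X u) (X w') (X m))
    (T' : SimpleGraph V) [DecidableRel T'.Adj]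
    (hT'conn : T'.Connected) (hT'acyc : T'.IsAcyclic) :
    ∑ e ∈ T'.edgeFinset, edgeMI w A X e ≤ ∑ e ∈ G.edgeFinset, edgeMI w A X e :=
  tree_is_max_weight_spanning_tree_general w hw0 A X G hGconn hGacyc hMarkov T' hT'conn hT'acyc
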